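/- arXiv:2603.09724 — 3 statements merged into one kernel-verified Lean document; each statement's English description precedes it below -/
import Mathlib

section
/- Let n ≥ 1 and let U ⊆ [0,∞)^n be a set that is closed in ℝ^n. Then E(Min_≺(U)) = E(U); that is, a vector ε ∈ ℝ^n contains no minimal element of U if and only if it contains no element of U at all. -/
/-!
Every `a ∈ U` contains a minimal element of `U`: the set of elements of `U` contained in `a` is
closed and lies in the box `∏ [-|a i|, |a i|]`, hence compact, so `∑ i, |x i|` attains a minimum
on it, and a minimiser cannot strictly contain any element of `U`. Hence containing an element of
`U` and containing a minimal one are the same condition.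
-/

/-- Refinement containment: `ε ⪯ ε′` iff `|ε i| ≤ |ε′ i|` for every coordinate. -/
def refCont {ι : Type*} (ε ε' : ι → ℝ) : Prop := ∀ i, |ε i| ≤ |ε' i|

/-- Strict refinement containment: `ε ≺ ε′` iff `ε ⪯ ε′` and `|ε i| < |ε′ i|` for some `i`. -/
def refSCont {ι : Type*} (ε ε' : ι → ℝ) : Prop := refCont ε ε' ∧ ∃ i, |ε i| < |ε' i|

/-- `Min_≺(R)`: the elements of `R` that strictly contain no element of `R`. -/
def minSet {ι : Type*} (R : Set (ι → ℝ)) : Set (ι → ℝ) :=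
  {ε ∈ R | ¬ ∃ ε' ∈ R, refSCont ε' ε}

/-- `E(R)`: the set of refinements containing no refinement of `R`. -/
def eSet {ι : Type*} (R : Set (ι → ℝ)) : Set (ι → ℝ) :=
  {ε | ¬ ∃ ε' ∈ R, refCont ε' ε}

section

variable {ι : Type*}

lemma refCont_refl (a : ι → ℝ) : refCont a a := fun _ => le_rfl

lemma refCont.trans {a b c : ι → ℝ} (hab : refCont a b) (hbc : refCont b c) : refCont a c :=
  fun i => (hab i).trans (hbc i)

lemma minSet_subset (R : Set (ι → ℝ)) : minSet R ⊆ R := Set.sep_subset _ _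

lemma eSet_eq_of_subset_of_forall_exists_refCont {R U : Set (ι → ℝ)} (hRU : R ⊆ U)
    (hR : ∀ a ∈ U, ∃ r ∈ R, refCont r a) : eSet R = eSet U := by
  ext ε
  refine not_congr ⟨fun ⟨r, hr, hrε⟩ => ⟨r, hRU hr, hrε⟩, fun ⟨a, ha, haε⟩ => ?_⟩
  obtain ⟨r, hr, hra⟩ := hR a ha
  exact ⟨r, hr, hra.trans haε⟩

lemma isCompact_setOf_refCont [Finite ι] (a : ι → ℝ) : IsCompact {x | refCont x a} := by
  have hbox : {x | refCont x a} = Set.univ.pi fun i => Set.Icc (-|a i|) |a i| := by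
    ext x
    simp only [refCont, Set.mem_ofPred_eq, Set.mem_univ_pi, Set.mem_Icc, abs_le]
  rw [hbox]
  exact isCompact_univ_pi fun _ => isCompact_Icc

lemma exists_mem_minSet_refCont [Fintype ι] {U : Set (ι → ℝ)} (hU : IsClosed U) {a : ι → ℝ}
    (ha : a ∈ U) : ∃ μ ∈ minSet U, refCont μ a := by
  set S := U ∩ {x | refCont x a}
  have hS : IsCompact S := (isCompact_setOf_refCont a).inter_left hU
  obtain ⟨μ, ⟨hμU, hμa⟩, hμmin⟩ := hS.exists_isMinOn ⟨a, ha, refCont_refl a⟩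
    (f := fun x => ∑ i, |x i|) (by fun_prop)
  refine ⟨μ, ⟨hμU, ?_⟩, hμa⟩
  rintro ⟨y, hyU, hyμ, j, hyj⟩
  have hy_lt : ∑ i, |y i| < ∑ i, |μ i| :=
    Finset.sum_lt_sum (fun i _ => hyμ i) ⟨j, Finset.mem_univ j, hyj⟩
  exact (hμmin ⟨hyU, hyμ.trans hμa⟩).not_gt hy_lt

end

theorem eSet_minSet_eq_general {n : ℕ} (U : Set (Fin n → ℝ))
    (hclosed : IsClosed U) :
    eSet (minSet U) = eSet U :=
  eSet_eq_of_subset_of_forall_exists_refCont (minSet_subset U)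
    fun _ ha => exists_mem_minSet_refCont hclosed ha

/-- `E(Min_≺(U)) = E(U)` for closed `U` inside the nonnegative orthant. -/
theorem eSet_minSet_eq {n : ℕ} (hn : 1 ≤ n) (U : Set (Fin n → ℝ))
    (hU : U ⊆ {x | ∀ i, 0 ≤ x i}) (hclosed : IsClosed U) :
    eSet (minSet U) = eSet U :=
  eSet_minSet_eq_general U hclosed
end

section
/- Let n ≥ 1, let U ⊆ [0,∞)^n be closed in ℝ^n, let i ∈ [n] be a coordinate, and let c ≥ 0 be such that the vector c·e_i (with value c in coordinate i and 0 elsewhere) belongs to U. Then every ε ∈ ℝ^n with |ε_i| ≥ c satisfies ε ∉ E(Min_≺(U)). -/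
/-!
Among the multiples `t • e_i` lying in `U`, take the one with the least `t`; it exists because
`U` is closed and its points are nonnegative. Anything `⪯`-below `t • e_i` is again a multiple
`s • e_i` with `|s| ≤ t`, so by nonnegativity and leastness it cannot be strictly below: `t • e_i`
is a minimal element of `U`. Since `t ≤ c ≤ |ε_i|`, it is contained in `ε`, so `ε ∉ E(Min_≺(U))`.
-/

section

variable {ι : Type*} [DecidableEq ι]

theorem eq_single_of_refCont_single {ε : ι → ℝ} {i : ι} {t : ℝ}
    (h : refCont ε (Pi.single i t)) : ε = Pi.single i (ε i) := by
  funext j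
  rcases eq_or_ne j i with rfl | hj
  · simp
  · simpa [hj] using h j

theorem refCont_single_of_abs_le {ε : ι → ℝ} {i : ι} {t : ℝ} (h : |t| ≤ |ε i|) :
    refCont (Pi.single i t) ε := by
  intro j
  rcases eq_or_ne j i with rfl | hj
  · simpa using h
  · simp [hj]

theorem exists_isLeast_single_mem {U : Set (ι → ℝ)} (hU : U ⊆ {x | ∀ j, 0 ≤ x j})
    (hclosed : IsClosed U) {i : ι} {c : ℝ} (hmem : Pi.single i c ∈ U) :
    ∃ t, IsLeast {s | Pi.single i s ∈ U} t :=
  ⟨_, (hclosed.preimage (continuous_single i)).isLeast_csInf ⟨c, hmem⟩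
    ⟨0, fun s hs => by simpa using hU hs i⟩⟩

theorem single_mem_minSet {U : Set (ι → ℝ)} (hU : U ⊆ {x | ∀ j, 0 ≤ x j}) {i : ι} {t : ℝ}
    (ht : IsLeast {s | Pi.single i s ∈ U} t) : Pi.single i t ∈ minSet U := by
  refine ⟨ht.1, ?_⟩
  rintro ⟨ε, hεU, hle, j, hlt⟩
  have hε : ε = Pi.single i (ε i) := eq_single_of_refCont_single hle
  have ht_le : t ≤ ε i := ht.2 (show Pi.single i (ε i) ∈ U from hε ▸ hεU)
  have ht_nonneg : 0 ≤ t := by simpa using hU ht.1 i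
  rw [hε] at hlt
  rcases eq_or_ne j i with rfl | hj
  · simp only [Pi.single_eq_same] at hlt
    rw [abs_of_nonneg ht_nonneg, abs_of_nonneg (ht_nonneg.trans ht_le)] at hlt
    linarith
  · simp [hj] at hlt

end

theorem single_dim_excludes_general {n : ℕ} (U : Set (Fin n → ℝ))
    (hU : U ⊆ {x | ∀ j, 0 ≤ x j}) (hclosed : IsClosed U)
    (i : Fin n) (c : ℝ)
    (hmem : (fun j => if j = i then c else 0) ∈ U) :
    ∀ ε : Fin n → ℝ, c ≤ |ε i| → ε ∉ eSet (minSet U) := by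
  intro ε hc hE
  have hsingle : Pi.single i c ∈ U := by
    convert hmem using 1
    funext j
    exact Pi.single_apply i c j
  obtain ⟨t, ht⟩ := exists_isLeast_single_mem hU hclosed hsingle
  have ht_nonneg : 0 ≤ t := by simpa using hU ht.1 i
  refine hE ⟨_, single_mem_minSet hU ht, refCont_single_of_abs_le ?_⟩
  rw [abs_of_nonneg ht_nonneg]
  exact (ht.2 hsingle).trans hc

/-- If the single-dimensional refinement of magnitude `c` in coordinate `i` is in `U`
(i.e., is `k`-unstable), then no refinement with magnitude at least `c` in coordinate
`i` lies in the stable zone `E(Min_≺(U))`. -/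
theorem single_dim_excludes {n : ℕ} (hn : 1 ≤ n) (U : Set (Fin n → ℝ))
    (hU : U ⊆ {x | ∀ j, 0 ≤ x j}) (hclosed : IsClosed U)
    (i : Fin n) (c : ℝ) (hc : 0 ≤ c)
    (hmem : (fun j => if j = i then c else 0) ∈ U) :
    ∀ ε : Fin n → ℝ, c ≤ |ε i| → ε ∉ eSet (minSet U) :=
  single_dim_excludes_general U hU hclosed i c hmem
end

section
/- Let S be a finite type with |S| = n, let x ∈ S, let k ∈ ℕ, and let σ, τ : S ≃ Fin n be bijections (rankings, lower position is better) such that for all a, b ∈ S \ {x}: σ(a) < σ(b) if and only if τ(a) < τ(b). Suppose k + 1 ≤ (σ(x) : ℕ) and (σ(x) : ℕ) + k + 1 ≤ n − 1, and let u = σ⁻¹(σ(x) − (k+1)) and d = σ⁻¹(σ(x) + (k+1)). Then |(σ(x) : ℤ) − (τ(x) : ℤ)| ≤ k if and only if τ(u) < τ(x) and τ(x) < τ(d). -/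
/-!
The position of a tuple `a ≠ x` is the number of tuples other than `x` ranked above it, plus
one if `x` is ranked above it. Tuple independence makes the first count the same under `σ` and
`τ`, so `u` and `d` keep their `σ`-positions in `τ` up to a shift by one, which happens exactly
when `x` has crossed them. Hence `x` stays strictly between `u` and `d` iff it moved by at most
`k` positions.
-/

open Finset

theorem Finset.card_filter_eq_card_filter_ne_add {α : Type*} [Fintype α] [DecidableEq α]
    (p : α → Prop) [DecidablePred p] (x : α) :
    #{b | p b} = #{b | b ≠ x ∧ p b} + if p x then 1 else 0 := by
  have herase : ({b | b ≠ x ∧ p b} : Finset α) = ({b | p b} : Finset α).erase x := by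
    ext b; simp [and_comm]
  rw [herase]
  split_ifs with hx
  · exact (card_erase_add_one (by simpa using hx)).symm
  · rw [erase_eq_of_notMem (by simpa using hx), add_zero]

namespace Equiv

variable {S : Type*} [Fintype S] {n : ℕ}

theorem val_eq_card_filter_lt (e : S ≃ Fin n) (a : S) : (e a : ℕ) = #{b | e b < e a} := by
  rw [← Fin.card_Iio, ← card_map e.symm.toEmbedding]
  congr 1
  ext b
  simp

theorem val_eq_card_filter_ne_lt_add [DecidableEq S] (e : S ≃ Fin n) (x a : S) :
    (e a : ℕ) = #{b | b ≠ x ∧ e b < e a} + if e x < e a then 1 else 0 := by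
  rw [val_eq_card_filter_lt, card_filter_eq_card_filter_ne_add]

theorem val_add_ite_eq_of_lt_iff_lt {x : S} {σ τ : S ≃ Fin n}
    (hrel : ∀ a b, a ≠ x → b ≠ x → (σ a < σ b ↔ τ a < τ b)) {a : S} (ha : a ≠ x) :
    (σ a : ℕ) + (if τ x < τ a then 1 else 0) = τ a + if σ x < σ a then 1 else 0 := by
  classical
  have hcount : #{b | b ≠ x ∧ σ b < σ a} = #{b | b ≠ x ∧ τ b < τ a} :=
    congrArg card <| filter_congr fun b _ => and_congr_right fun hb => hrel b a hb ha
  rw [σ.val_eq_card_filter_ne_lt_add x a, τ.val_eq_card_filter_ne_lt_add x a, hcount]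
  omega

end Equiv

/-- Correctness of the re-ranking cost optimization: for a tuple-independent change
(the rankings `σ` and `τ` agree on the relative order of all tuples other than `x`),
the position of `x` changes by at most `k` if and only if `x` still ranks strictly
below the tuple `u` ranked `k+1` positions above it and strictly above the tuple `d`
ranked `k+1` positions below it. -/
theorem rerank_window {S : Type*} [Fintype S] {n : ℕ}
    (x : S) (k : ℕ) (σ τ : S ≃ Fin n)
    (hrel : ∀ a b : S, a ≠ x → b ≠ x → ((σ a : ℕ) < (σ b : ℕ) ↔ (τ a : ℕ) < (τ b : ℕ)))
    (h1 : k + 1 ≤ (σ x : ℕ)) (h2 : (σ x : ℕ) + k + 1 ≤ n - 1)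
    (u d : S)
    (hu : u = σ.symm ⟨(σ x : ℕ) - (k + 1), by have := (σ x).isLt; omega⟩)
    (hd : d = σ.symm ⟨(σ x : ℕ) + (k + 1), by omega⟩) :
    |((σ x : ℕ) : ℤ) - ((τ x : ℕ) : ℤ)| ≤ (k : ℤ) ↔
      ((τ u : ℕ) < (τ x : ℕ) ∧ (τ x : ℕ) < (τ d : ℕ)) := by
  have hσu : (σ u : ℕ) = σ x - (k + 1) := by simp [hu]
  have hσd : (σ d : ℕ) = σ x + (k + 1) := by simp [hd]
  have hux : u ≠ x := by rintro rfl; omega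
  have hdx : d ≠ x := by rintro rfl; omega
  have hτu : (τ u : ℕ) ≠ τ x := Fin.val_ne_iff.mpr (τ.injective.ne hux)
  have hτd : (τ d : ℕ) ≠ τ x := Fin.val_ne_iff.mpr (τ.injective.ne hdx)
  have hshift_u := Equiv.val_add_ite_eq_of_lt_iff_lt hrel hux
  have hshift_d := Equiv.val_add_ite_eq_of_lt_iff_lt hrel hdx
  simp only [Fin.lt_def] at hshift_u hshift_d
  rw [abs_le]
  split_ifs at hshift_u hshift_d <;> omega
end
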